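/- arXiv:1708.06304 — 2 statements merged into one kernel-verified Lean document; each statement's English description precedes it below -/
import Mathlib

section
/- For the fundamental line rogue wave q = 1 - (2i l₂ + 1)/(l₁² + l₂² + θ₀) with p real (p_I = 0), so that l₂ = -a' t + b₂ depends only on t (with a' ≠ 0) while l₁ is a nonconstant affine function of (x,y,t): one has sup_{x,y} |q(x,y,t)| → 1 as t → ±∞, and at t with l₂ = 0, along the line l₁ = 0 the amplitude satisfies |q| = |1 - 1/θ₀| which equals 3 when θ₀ = 1/4. -/
/-!
Since the denominator `l₁² + l₂² + θ₀` is at least `l₂² + θ₀`,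
`|‖q‖ - 1| ≤ ‖q - 1‖ ≤ (2 |l₂| + 1) / (l₂² + θ₀)`, a bound that does not involve `l₁`, hence not
`(x, y)`. As `l₂` is a nonconstant affine function of `t`, `|l₂| → ∞` when `t → ±∞`, so this bound
tends to `0` and the convergence is uniform. At `l₁ = l₂ = 0` the profile is the real `1 - 1 / θ₀`.
-/

open Filter Complex

noncomputable def rogueWave (θ₀ l₁ l₂ : ℝ) : ℂ :=
  1 - (2 * I * (l₂ : ℂ) + 1) / ((l₁ ^ 2 + l₂ ^ 2 + θ₀ : ℝ) : ℂ)

theorem abs_norm_rogueWave_sub_one_le {θ₀ : ℝ} (hθ : 0 < θ₀) (l₁ l₂ : ℝ) :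
    |‖rogueWave θ₀ l₁ l₂‖ - 1| ≤ (2 * |l₂| + 1) / (|l₂| ^ 2 + θ₀) := by
  have hD : 0 < l₁ ^ 2 + l₂ ^ 2 + θ₀ := by positivity
  have hnum : ‖2 * I * (l₂ : ℂ) + 1‖ ≤ 2 * |l₂| + 1 :=
    (norm_add_le _ _).trans_eq (by simp)
  calc |‖rogueWave θ₀ l₁ l₂‖ - 1| ≤ ‖rogueWave θ₀ l₁ l₂ - 1‖ := by
        simpa using abs_norm_sub_norm_le (rogueWave θ₀ l₁ l₂) 1
    _ = ‖2 * I * (l₂ : ℂ) + 1‖ / (l₁ ^ 2 + l₂ ^ 2 + θ₀) := by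
        rw [rogueWave, sub_sub_cancel_left, norm_neg, norm_div, norm_real,
          Real.norm_of_nonneg hD.le]
    _ ≤ (2 * |l₂| + 1) / (|l₂| ^ 2 + θ₀) :=
        div_le_div₀ (by positivity) hnum (by positivity) (by nlinarith [sq_abs l₂, sq_nonneg l₁])

theorem tendsto_div_sq_add_atTop {θ₀ : ℝ} (hθ : 0 < θ₀) :
    Tendsto (fun s : ℝ => (2 * s + 1) / (s ^ 2 + θ₀)) atTop (nhds 0) := by
  have h_inv : Tendsto (fun s : ℝ => 3 / s) atTop (nhds 0) :=
    tendsto_const_nhds.div_atTop tendsto_id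
  refine squeeze_zero' ?_ ?_ h_inv
  · filter_upwards [eventually_ge_atTop 0] with s hs
    positivity
  · filter_upwards [eventually_ge_atTop 1] with s hs
    rw [div_le_div_iff₀ (by positivity) (by linarith)]
    nlinarith

theorem tendstoUniformly_norm_rogueWave {ι α : Type*} {f : Filter ι} {θ₀ : ℝ} (hθ : 0 < θ₀)
    (l₁ : ι → α → ℝ) {l₂ : ι → ℝ} (hl₂ : Tendsto (fun t => |l₂ t|) f atTop) :
    TendstoUniformly (fun t v => ‖rogueWave θ₀ (l₁ t v) (l₂ t)‖) (fun _ => 1) f := by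
  rw [Metric.tendstoUniformly_iff]
  intro ε hε
  filter_upwards [((tendsto_div_sq_add_atTop hθ).comp hl₂).eventually (gt_mem_nhds hε)]
    with t ht v
  rw [Real.dist_eq, abs_sub_comm]
  exact (abs_norm_rogueWave_sub_one_le hθ _ _).trans_lt ht

theorem tendsto_abs_affine_cocompact {a : ℝ} (ha : a ≠ 0) (b : ℝ) :
    Tendsto (fun t => |a * t + b|) (cocompact ℝ) atTop := by
  have hlin : Tendsto (fun t : ℝ => |a| * ‖t‖ - |b|) (cocompact ℝ) atTop :=
    tendsto_atTop_add_const_right _ _ (tendsto_norm_cocompact_atTop.const_mul_atTop (abs_pos.2 ha))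
  refine tendsto_atTop_mono (fun t => ?_) hlin
  simpa only [Real.norm_eq_abs, abs_mul] using abs_sub_abs_le_abs_add (a * t) b

theorem norm_rogueWave_zero_zero (θ₀ : ℝ) : ‖rogueWave θ₀ 0 0‖ = |1 - 1 / θ₀| := by
  have : rogueWave θ₀ 0 0 = ((1 - 1 / θ₀ : ℝ) : ℂ) := by simp [rogueWave]
  rw [this, norm_real, Real.norm_eq_abs]

theorem stmt_14_general (a' b₂ θ₀ : ℝ) (ha' : a' ≠ 0)
    (hθ : 0 < θ₀)
    (l₁ : ℝ → ℝ → ℝ → ℝ) (l₂ : ℝ → ℝ)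
    (hl₂ : ∀ t, l₂ t = -a' * t + b₂)
    (q : ℝ → ℝ → ℝ → ℂ)
    (hq : ∀ x y t, q x y t = 1 - (2 * Complex.I * (l₂ t : ℂ) + 1)
        / (((l₁ x y t) ^ 2 + (l₂ t) ^ 2 + θ₀ : ℝ) : ℂ)) :
    TendstoUniformly (fun t (v : ℝ × ℝ) => ‖q v.1 v.2 t‖)
      (fun _ => 1) Filter.atTop ∧
    TendstoUniformly (fun t (v : ℝ × ℝ) => ‖q v.1 v.2 t‖)
      (fun _ => 1) Filter.atBot ∧
    (∀ x y t : ℝ, l₂ t = 0 → l₁ x y t = 0 →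
      ‖q x y t‖ = |1 - 1 / θ₀| ∧
      (θ₀ = 1 / 4 → ‖q x y t‖ = 3)) := by
  have hq' : ∀ x y t, q x y t = rogueWave θ₀ (l₁ x y t) (l₂ t) := hq
  have hl₂_abs : Tendsto (fun t => |l₂ t|) (cocompact ℝ) atTop := by
    simpa only [hl₂] using tendsto_abs_affine_cocompact (neg_ne_zero.2 ha') b₂
  simp only [hq']
  refine ⟨tendstoUniformly_norm_rogueWave hθ _ (hl₂_abs.mono_left atTop_le_cocompact),
    tendstoUniformly_norm_rogueWave hθ _ (hl₂_abs.mono_left atBot_le_cocompact), ?_⟩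
  intro x y t h₂ h₁
  rw [h₁, h₂, norm_rogueWave_zero_zero]
  exact ⟨rfl, fun h => by norm_num [h]⟩

theorem stmt_14 (a' b₂ α β δ ε θ₀ : ℝ) (ha' : a' ≠ 0) (hαβ : (α, β) ≠ (0, 0))
    (hθ : 0 < θ₀)
    (l₁ : ℝ → ℝ → ℝ → ℝ) (l₂ : ℝ → ℝ)
    (hl₁ : ∀ x y t, l₁ x y t = α * x + β * y + δ * t + ε)
    (hl₂ : ∀ t, l₂ t = -a' * t + b₂)
    (q : ℝ → ℝ → ℝ → ℂ)
    (hq : ∀ x y t, q x y t = 1 - (2 * Complex.I * (l₂ t : ℂ) + 1)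
        / (((l₁ x y t) ^ 2 + (l₂ t) ^ 2 + θ₀ : ℝ) : ℂ)) :
    TendstoUniformly (fun t (v : ℝ × ℝ) => ‖q v.1 v.2 t‖)
      (fun _ => 1) Filter.atTop ∧
    TendstoUniformly (fun t (v : ℝ × ℝ) => ‖q v.1 v.2 t‖)
      (fun _ => 1) Filter.atBot ∧
    (∀ x y t : ℝ, l₂ t = 0 → l₁ x y t = 0 →
      ‖q x y t‖ = |1 - 1 / θ₀| ∧
      (θ₀ = 1 / 4 → ‖q x y t‖ = 3)) :=
  stmt_14_general a' b₂ θ₀ ha' hθ l₁ l₂ hl₂ q hq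
end

section
/- Verification of an explicit mixed solution: the function q(x,y,t) with numerator -(-2+2i)e^{-i(2x+y)} + (2+2i)e^{i(2x+y)} + e^{-2x+y} + 4i(e^{-3t} - e^{3t}) and denominator (-2+2i)e^{-i(2x+y)} - (2+2i)e^{i(2x+y)} + e^{-2x+y} + 4(e^{-3t} + e^{3t}) satisfies |q(x,y,t)| → 1 as t → ±∞ uniformly on compact sets in (x,y), and the denominator is real-valued and strictly positive for all real x, y, t. -/
/-!
Write `θ = 2x + y`. By Euler's formula the two oscillating terms of the denominator add up to the
real number `4 (sin θ - cos θ) ≥ -8`, while `4 (e^{-3t} + e^{3t}) ≥ 8` and `e^{-2x+y} > 0`.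

Numerator and denominator have the form `P(x,y) + a e^{-3t} + b e^{3t}` and
`Q(x,y) + c e^{-3t} + d e^{3t}` with `P, Q` continuous and `(a, b, c, d) = (4i, -4i, 4, 4)`.
Dividing by the dominant exponential, the quotient tends to `b / d = -i` as `t → +∞` and to
`a / c = i` as `t → -∞`; continuity of `P, Q` makes the convergence locally uniform in `(x, y)`.
-/

open Filter Topology Complex

theorem tendsto_div_of_inv_dominant {α 𝕜 : Type*} [NormedField 𝕜] {l : Filter α}
    {p q r : α → 𝕜} {p₀ q₀ a b c d : 𝕜} (hp : Tendsto p l (𝓝 p₀)) (hq : Tendsto q l (𝓝 q₀))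
    (hr : Tendsto r l (𝓝[≠] 0)) (hd : d ≠ 0) :
    Tendsto (fun x => (p x + a * r x + b * (r x)⁻¹) / (q x + c * r x + d * (r x)⁻¹)) l
      (𝓝 (b / d)) := by
  have hr₀ : Tendsto r l (𝓝 0) := tendsto_nhds_of_tendsto_nhdsWithin hr
  have hlim : Tendsto (fun x => (p x * r x + a * r x ^ 2 + b) / (q x * r x + c * r x ^ 2 + d)) l
      (𝓝 ((p₀ * 0 + a * 0 ^ 2 + b) / (q₀ * 0 + c * 0 ^ 2 + d))) :=
    ((hp.mul hr₀).add ((hr₀.pow 2).const_mul a) |>.add_const b).div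
      ((hq.mul hr₀).add ((hr₀.pow 2).const_mul c) |>.add_const d) (by simpa using hd)
  simp only [mul_zero, zero_pow two_ne_zero, zero_add] at hlim
  refine hlim.congr' ((tendsto_nhdsWithin_iff.mp hr).2.mono fun x (hx : r x ≠ 0) => ?_)
  rw [eq_comm, ← mul_div_mul_right _ _ hx]
  field_simp

theorem tendstoUniformlyOn_const_of_tendsto_prod_nhds {ι X β : Type*} [TopologicalSpace X]
    [LocallyCompactSpace X] [UniformSpace β] {l : Filter ι} {F : ι → X → β} {c : β}
    (h : ∀ x, Tendsto ↿F (l ×ˢ 𝓝 x) (𝓝 c)) {K : Set X} (hK : IsCompact K) :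
    TendstoUniformlyOn F (fun _ => c) l K := by
  refine tendstoLocallyUniformly_iff_forall_isCompact.mp
    (tendstoLocallyUniformly_iff_filter.mpr fun x => ?_) K hK
  rw [tendstoUniformlyOnFilter_iff_tendsto]
  rw [nhds_eq_comap_uniformity] at h
  exact tendsto_comap_iff.mp (h x)

theorem tendstoUniformlyOn_norm_div_of_inv_dominant {ι X 𝕜 : Type*} [TopologicalSpace X]
    [LocallyCompactSpace X] [NormedField 𝕜] {P Q : X → 𝕜} (hP : Continuous P) (hQ : Continuous Q)
    {l : Filter ι} {r : ι → 𝕜} (hr : Tendsto r l (𝓝[≠] 0)) {a b c d : 𝕜} (hd : d ≠ 0)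
    {K : Set X} (hK : IsCompact K) :
    TendstoUniformlyOn
      (fun i v => ‖(P v + a * r i + b * (r i)⁻¹) / (Q v + c * r i + d * (r i)⁻¹)‖)
      (fun _ => ‖b / d‖) l K :=
  tendstoUniformlyOn_const_of_tendsto_prod_nhds (fun v => (tendsto_div_of_inv_dominant
    ((hP.tendsto v).comp tendsto_snd) ((hQ.tendsto v).comp tendsto_snd) (hr.comp tendsto_fst)
    hd).norm) hK

theorem tendsto_cexp_nhdsNE_zero {α : Type*} {l : Filter α} {f : α → ℂ}
    (hf : Tendsto (fun x => (f x).re) l atBot) : Tendsto (fun x => exp (f x)) l (𝓝[≠] 0) :=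
  tendsto_exp_comap_re_atBot_nhdsNE.comp (tendsto_comap_iff.mpr hf)

section ExpDominant

variable {X : Type*} [TopologicalSpace X] [LocallyCompactSpace X] {P Q : X → ℂ}
  {a b c d : ℂ} {κ : ℝ} {K : Set X}

theorem tendstoUniformlyOn_norm_div_exp_atTop (hP : Continuous P) (hQ : Continuous Q)
    (hd : d ≠ 0) (hκ : 0 < κ) (hK : IsCompact K) :
    TendstoUniformlyOn
      (fun (t : ℝ) v => ‖(P v + a * exp (-κ * t) + b * exp (κ * t))
        / (Q v + c * exp (-κ * t) + d * exp (κ * t))‖)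
      (fun _ => ‖b / d‖) atTop K := by
  have hr : Tendsto (fun t : ℝ => exp (-κ * t)) atTop (𝓝[≠] 0) :=
    tendsto_cexp_nhdsNE_zero (by simpa using tendsto_id.const_mul_atTop_of_neg (neg_lt_zero.2 hκ))
  simpa only [← exp_neg, neg_mul, neg_neg]
    using tendstoUniformlyOn_norm_div_of_inv_dominant hP hQ hr hd hK

theorem tendstoUniformlyOn_norm_div_exp_atBot (hP : Continuous P) (hQ : Continuous Q)
    (hc : c ≠ 0) (hκ : 0 < κ) (hK : IsCompact K) :
    TendstoUniformlyOn
      (fun (t : ℝ) v => ‖(P v + a * exp (-κ * t) + b * exp (κ * t))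
        / (Q v + c * exp (-κ * t) + d * exp (κ * t))‖)
      (fun _ => ‖a / c‖) atBot K := by
  have hr : Tendsto (fun t : ℝ => exp (κ * t)) atBot (𝓝[≠] 0) :=
    tendsto_cexp_nhdsNE_zero (by simpa using tendsto_id.const_mul_atBot hκ)
  refine (tendstoUniformlyOn_norm_div_of_inv_dominant (a := b) (c := d) hP hQ hr hc hK).congr
    (Eventually.of_forall fun t v _ => ?_)
  dsimp only
  rw [neg_mul, exp_neg, add_right_comm (P v), add_right_comm (Q v)]

end ExpDominant

theorem exp_combination_eq_ofReal (θ : ℝ) :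
    (-2 + 2 * I) * exp (-I * θ) - (2 + 2 * I) * exp (I * θ)
      = ((4 * (Real.sin θ - Real.cos θ) : ℝ) : ℂ) := by
  rw [show -I * θ = (-θ : ℂ) * I by ring, mul_comm I, exp_mul_I, exp_mul_I, cos_neg, sin_neg,
    ← ofReal_cos, ← ofReal_sin]
  push_cast
  ring_nf
  rw [I_sq]
  ring

theorem den_eq_ofReal (x y t : ℝ) :
    (-2 + 2 * I) * exp (-I * (2 * (x : ℂ) + y)) - (2 + 2 * I) * exp (I * (2 * (x : ℂ) + y))
        + exp (-2 * (x : ℂ) + y) + 4 * (exp (-3 * (t : ℂ)) + exp (3 * (t : ℂ)))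
      = ((Real.exp (-2 * x + y) + 4 * (Real.exp (-(3 * t)) + Real.exp (3 * t))
          + 4 * (Real.sin (2 * x + y) - Real.cos (2 * x + y)) : ℝ) : ℂ) := by
  rw [show 2 * (x : ℂ) + y = ((2 * x + y : ℝ) : ℂ) by push_cast; ring, exp_combination_eq_ofReal]
  push_cast
  ring_nf

theorem two_le_exp_neg_add_exp (t : ℝ) : 2 ≤ Real.exp (-t) + Real.exp t := by
  linarith [Real.add_one_le_exp (-t), Real.add_one_le_exp t]

theorem stmt_18 (num den : ℝ → ℝ → ℝ → ℂ)
    (hnum : ∀ x y t : ℝ, num x y t =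
      -(-2 + 2 * Complex.I) * Complex.exp (-Complex.I * (2 * (x : ℂ) + (y : ℂ)))
        + (2 + 2 * Complex.I) * Complex.exp (Complex.I * (2 * (x : ℂ) + (y : ℂ)))
        + Complex.exp (-2 * (x : ℂ) + (y : ℂ))
        + 4 * Complex.I * (Complex.exp (-3 * (t : ℂ)) - Complex.exp (3 * (t : ℂ))))
    (hden : ∀ x y t : ℝ, den x y t =
      (-2 + 2 * Complex.I) * Complex.exp (-Complex.I * (2 * (x : ℂ) + (y : ℂ)))
        - (2 + 2 * Complex.I) * Complex.exp (Complex.I * (2 * (x : ℂ) + (y : ℂ)))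
        + Complex.exp (-2 * (x : ℂ) + (y : ℂ))
        + 4 * (Complex.exp (-3 * (t : ℂ)) + Complex.exp (3 * (t : ℂ)))) :
    (∀ x y t : ℝ, (den x y t).im = 0 ∧ 0 < (den x y t).re) ∧
    (∀ K : Set (ℝ × ℝ), IsCompact K →
      TendstoUniformlyOn
        (fun t (v : ℝ × ℝ) => ‖num v.1 v.2 t / den v.1 v.2 t‖)
        (fun _ => 1) Filter.atTop K ∧
      TendstoUniformlyOn
        (fun t (v : ℝ × ℝ) => ‖num v.1 v.2 t / den v.1 v.2 t‖)
        (fun _ => 1) Filter.atBot K) := by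
  refine ⟨fun x y t => ?_, fun K hK => ?_⟩
  · rw [hden, den_eq_ofReal, ofReal_im, ofReal_re]
    exact ⟨rfl, by nlinarith [Real.exp_pos (-2 * x + y), two_le_exp_neg_add_exp (3 * t),
      Real.neg_one_le_sin (2 * x + y), Real.cos_le_one (2 * x + y)]⟩
  set P : ℝ × ℝ → ℂ := fun v => -(-2 + 2 * I) * exp (-I * (2 * (v.1 : ℂ) + v.2))
    + (2 + 2 * I) * exp (I * (2 * (v.1 : ℂ) + v.2)) + exp (-2 * (v.1 : ℂ) + v.2)
  set Q : ℝ × ℝ → ℂ := fun v => (-2 + 2 * I) * exp (-I * (2 * (v.1 : ℂ) + v.2))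
    - (2 + 2 * I) * exp (I * (2 * (v.1 : ℂ) + v.2)) + exp (-2 * (v.1 : ℂ) + v.2)
  have hP : Continuous P := by fun_prop
  have hQ : Continuous Q := by fun_prop
  have hnum' : ∀ (v : ℝ × ℝ) (t : ℝ), num v.1 v.2 t
      = P v + 4 * I * exp (-(3 : ℝ) * t) + (-4 * I) * exp ((3 : ℝ) * t) := fun v t => by
    rw [hnum]; push_cast; ring
  have hden' : ∀ (v : ℝ × ℝ) (t : ℝ), den v.1 v.2 t
      = Q v + 4 * exp (-(3 : ℝ) * t) + 4 * exp ((3 : ℝ) * t) := fun v t => by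
    rw [hden]; push_cast; ring
  simp only [hnum', hden']
  constructor
  · convert tendstoUniformlyOn_norm_div_exp_atTop hP hQ (by norm_num : (4 : ℂ) ≠ 0) three_pos hK
      using 2
    simp
  · convert tendstoUniformlyOn_norm_div_exp_atBot hP hQ (by norm_num : (4 : ℂ) ≠ 0) three_pos hK
      using 2
    simp
end
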